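/- Suppose lim_{x→a⁺} s(x) = ∞, the right boundary b is natural (lim_{x→b} s(x)·M[a,x] = ∞ and ∫_{x₀}^{b} M[x₀,v] s(v) dv = ∞), the left boundary a is natural (∫_a^{x₀} M[a,v] s(v) dv = ∞), μ extends continuously to x = a with a finite value μ(a), and there exists a pair (w̃,ỹ) with a < w̃ < ỹ < b and F(w̃,ỹ) > γ c̄(b). Then there exists a pair (w*,y*) with a < w* < y* < b at which F attains its supremum over 𝓡, and every such maximizing pair satisfies the first-order conditions sup_{(w,y)∈𝓡} F(w,y) = F(w*,y*) = h(w*) = h(y*). -/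

import Mathlib

open MeasureTheory Filter Set Topology
open scoped Classical

noncomputable section

/-- The state interval `(a, b)` where `a` is real and `b ∈ (a, ∞]`. -/
def stInt (a : ℝ) (b : EReal) : Set ℝ := {x : ℝ | a < x ∧ (x : EReal) < b}

/-- The filter of approach to the right endpoint `b ∈ (a, ∞]`:
`atTop` when `b = ∞`, and the left-neighborhood filter of `b` otherwise. -/
def atB (b : EReal) : Filter ℝ :=
  if b = ⊤ then Filter.atTop else nhdsWithin b.toReal (Set.Iio b.toReal)

/-- The scale density `s(x) = exp(-∫_{x₀}^x 2μ/σ²)`. -/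
def sDen (μ σ : ℝ → ℝ) (x₀ x : ℝ) : ℝ :=
  Real.exp (-(∫ y in x₀..x, 2 * μ y / (σ y) ^ 2))

/-- The speed density `m(x) = 2/(σ(x)² s(x))`. -/
def mDen (μ σ : ℝ → ℝ) (x₀ x : ℝ) : ℝ :=
  2 / ((σ x) ^ 2 * sDen μ σ x₀ x)

/-- `M[a,x] = ∫_a^x m(u) du`. -/
def Mab (μ σ : ℝ → ℝ) (x₀ a x : ℝ) : ℝ :=
  ∫ u in Set.Ioo a x, mDen μ σ x₀ u

/-- The time potential `ξ(x) = ∫_{x₀}^x M[a,v] s(v) dv`. -/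
def xiF (μ σ : ℝ → ℝ) (x₀ a x : ℝ) : ℝ :=
  ∫ v in x₀..x, Mab μ σ x₀ a v * sDen μ σ x₀ v

/-- The running reward potential `g(x) = ∫_{x₀}^x (∫_a^v c(u) m(u) du) s(v) dv`. -/
def gF (μ σ c : ℝ → ℝ) (x₀ a x : ℝ) : ℝ :=
  ∫ v in x₀..x, (∫ u in Set.Ioo a v, c u * mDen μ σ x₀ u) * sDen μ σ x₀ v

/-- `h(x) = (∫_a^x (γ c(u) + p μ(u)) m(u) du) / M[a,x]`. -/
def hF (μ σ c : ℝ → ℝ) (x₀ a p γ x : ℝ) : ℝ :=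
  (∫ u in Set.Ioo a x, (γ * c u + p * μ u) * mDen μ σ x₀ u) / Mab μ σ x₀ a x

/-- The long-term average reward `F(w,y)` of the `(w,y)`-impulse policy. -/
def FF (μ σ c : ℝ → ℝ) (x₀ a p K γ w y : ℝ) : ℝ :=
  (p * (y - w) - K + γ * (gF μ σ c x₀ a y - gF μ σ c x₀ a w)) /
    (xiF μ σ x₀ a y - xiF μ σ x₀ a w)

/-- `c̄(b)`: equals `⟨c,π⟩` when `M[a,b] < ∞` and the boundary value `c(b)` otherwise. -/
def cbar (μ σ c : ℝ → ℝ) (x₀ a : ℝ) (b : EReal) (cb : ℝ) : ℝ :=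
  if MeasureTheory.IntegrableOn (mDen μ σ x₀) (stInt a b) MeasureTheory.volume then
    (∫ u in stInt a b, c u * mDen μ σ x₀ u) / (∫ u in stInt a b, mDen μ σ x₀ u)
  else cb

/-!
Write `φ(x) = p x + γ g(x)`, so that `F(w, y) = (φ y - φ w - K) / (ξ y - ξ w)`. Since
`s → ∞` at `a`, `∫_a^x μ m = 1/s(x)`, which gives `φ' = h ξ'`; the first-order conditions are
then those of a ratio of increments at an interior maximum.

For existence pick `r` with `γ c̄(b) < r < F(w̃, ỹ)`. A natural left boundary forces `μ(a) = 0`, so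
`h → γ c(a) ≤ γ c̄(b)` at `a`, while `s M → ∞` gives `limsup h ≤ γ c̄(b)` at `b`; hence `φ - r ξ`
decreases near both ends. With `Ψ = φ - F(w̃, ỹ) ξ`, `F(w, y) ≥ F(w̃, ỹ)` iff
`Ψ y - Ψ w ≥ K`, and `Ψ` decreases near both ends with `Ψ → +∞` at `a`, `Ψ → -∞` at `b`
(both boundaries being natural, `ξ` is unbounded at each). So these pairs lie in a compact square
inside `(a, b)`, on which `F` attains its maximum.
-/

theorem exists_isMaxOn_of_superlevel_subset {X α : Type*} [TopologicalSpace X] [LinearOrder α]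
    [TopologicalSpace α] [ClosedIciTopology α] {f : X → α} {D S : Set X} (hS : IsCompact S)
    (hSD : S ⊆ D) (hf : ContinuousOn f S) {x₀ : X} (hx₀ : x₀ ∈ D)
    (hsuper : ∀ x ∈ D, f x₀ ≤ f x → x ∈ S) : ∃ x ∈ D, IsMaxOn f D x := by
  obtain ⟨x, hxS, hmax⟩ := hS.exists_isMaxOn ⟨x₀, hsuper x₀ hx₀ le_rfl⟩ hf
  refine ⟨x, hSD hxS, fun y hy => ?_⟩
  rcases le_or_gt (f x₀) (f y) with hle | hlt
  · exact hmax (hsuper y hy hle)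
  · exact hlt.le.trans (hmax (hsuper x₀ hx₀ le_rfl))

theorem IsLocalMax.div_eq_div_of_hasDerivAt {N D : ℝ → ℝ} {x n d : ℝ}
    (hmax : IsLocalMax (fun t => N t / D t) x) (hN : HasDerivAt N n x) (hD : HasDerivAt D d x)
    (hDx : D x ≠ 0) (hd : d ≠ 0) : N x / D x = n / d := by
  have hzero := hmax.hasDerivAt_eq_zero (hN.div hD hDx)
  rw [div_eq_zero_iff, or_iff_left (pow_ne_zero 2 hDx), sub_eq_zero] at hzero
  rw [div_eq_div_iff hDx hd]
  linarith

theorem setIntegral_mul_le_const_mul {s : Set ℝ} {f m : ℝ → ℝ} {C : ℝ} (hs : MeasurableSet s)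
    (hfm : IntegrableOn (fun u => f u * m u) s) (hm : IntegrableOn m s)
    (hm0 : ∀ u ∈ s, 0 ≤ m u) (hfC : ∀ u ∈ s, f u ≤ C) :
    ∫ u in s, f u * m u ≤ C * ∫ u in s, m u := by
  rw [← integral_const_mul]
  exact setIntegral_mono_on hfm (hm.const_mul C) hs fun u hu =>
    mul_le_mul_of_nonneg_right (hfC u hu) (hm0 u hu)

theorem const_mul_le_setIntegral_mul {s : Set ℝ} {f m : ℝ → ℝ} {C : ℝ} (hs : MeasurableSet s)
    (hfm : IntegrableOn (fun u => f u * m u) s) (hm : IntegrableOn m s)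
    (hm0 : ∀ u ∈ s, 0 ≤ m u) (hfC : ∀ u ∈ s, C ≤ f u) :
    C * ∫ u in s, m u ≤ ∫ u in s, f u * m u := by
  rw [← integral_const_mul]
  exact setIntegral_mono_on (hm.const_mul C) hfm hs fun u hu =>
    mul_le_mul_of_nonneg_right (hfC u hu) (hm0 u hu)

section StateInterval

variable {a : ℝ} {b : EReal}

theorem isOpen_stInt : IsOpen (stInt a b) :=
  isOpen_Ioi.inter (isOpen_Iio.preimage continuous_coe_real_ereal)

theorem mem_stInt_of_le {x y : ℝ} (hx : x ∈ stInt a b) (hay : a < y) (hyx : y ≤ x) :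
    y ∈ stInt a b :=
  ⟨hay, (EReal.coe_le_coe_iff.2 hyx).trans_lt hx.2⟩

theorem ordConnected_stInt : OrdConnected (stInt a b) :=
  ⟨fun _ hx _ hy _ hz => mem_stInt_of_le hy (hx.1.trans_le hz.1) hz.2⟩

theorem convex_stInt : Convex ℝ (stInt a b) := ordConnected_stInt.convex

theorem coe_lt_of_mem_stInt {x : ℝ} (hx : x ∈ stInt a b) : (a : EReal) < b :=
  (EReal.coe_lt_coe_iff.2 hx.1).trans hx.2

theorem nonempty_stInt (hab : (a : EReal) < b) : (stInt a b).Nonempty := by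
  obtain ⟨y, hay, hyb⟩ := EReal.exists_between_coe_real hab
  exact ⟨y, EReal.coe_lt_coe_iff.1 hay, hyb⟩

theorem Ioo_subset_stInt {x : ℝ} (hx : x ∈ stInt a b) : Ioo a x ⊆ stInt a b :=
  fun _ hy => mem_stInt_of_le hx hy.1 hy.2.le

theorem exists_forall_lt_of_eventually_nhdsGT {P : ℝ → Prop} (hP : ∀ᶠ y in 𝓝[>] a, P y)
    {x : ℝ} (hx : x ∈ stInt a b) :
    ∃ α ∈ stInt a b, α ≤ x ∧ ∀ y ∈ stInt a b, y < α → P y := by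
  obtain ⟨u, hau, hsub⟩ := mem_nhdsGT_iff_exists_Ioo_subset.1 hP
  exact ⟨min u x, mem_stInt_of_le hx (lt_min hau hx.1) (min_le_right _ _), min_le_right _ _,
    fun y hy hyα => hsub ⟨hy.1, hyα.trans_le (min_le_left _ _)⟩⟩

theorem eventually_atB_iff (hab : (a : EReal) < b) {P : ℝ → Prop} :
    (∀ᶠ y in atB b, P y) ↔ ∃ β ∈ stInt a b, ∀ y ∈ stInt a b, β < y → P y := by
  unfold atB
  split_ifs with hb
  · subst hb
    have hmem : ∀ y : ℝ, y ∈ stInt a ⊤ ↔ a < y := fun y => by simp [stInt]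
    simp only [hmem, eventually_atTop]
    constructor
    · rintro ⟨B, hB⟩
      exact ⟨max B (a + 1), by linarith [le_max_right B (a + 1)],
        fun y _ hy => hB y ((le_max_left _ _).trans hy.le)⟩
    · rintro ⟨β, hβ, hP⟩
      exact ⟨β + 1, fun y hy => hP y (by linarith) (by linarith)⟩
  · have hcoe : (b.toReal : EReal) = b := EReal.coe_toReal hb (ne_bot_of_gt hab)
    have hlt : ∀ y : ℝ, (y : EReal) < b ↔ y < b.toReal := fun y => by
      rw [← EReal.coe_lt_coe_iff, hcoe]
    simp only [stInt, hlt, mem_nhdsLT_iff_exists_Ioo_subset, Filter.Eventually]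
    constructor
    · rintro ⟨l, hl, hsub⟩
      have hab' : a < b.toReal := by rw [← hlt]; exact hab
      refine ⟨(max l a + b.toReal) / 2, ⟨?_, ?_⟩, fun y hy hβy => hsub ⟨?_, hy.2⟩⟩ <;>
        linarith [le_max_left l a, le_max_right l a, max_lt hl hab']
    · rintro ⟨β, hβ, hP⟩
      exact ⟨β, hβ.2, fun y hy => hP y ⟨hβ.1.trans hy.1, hy.2⟩ hy.1⟩

theorem eventually_atB_mem_gt (hab : (a : EReal) < b) {x : ℝ} (hx : x ∈ stInt a b) :
    ∀ᶠ y in atB b, y ∈ stInt a b ∧ x < y :=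
  (eventually_atB_iff hab).2 ⟨x, hx, fun _ hy hxy => ⟨hy, hxy⟩⟩

theorem exists_forall_gt_of_eventually_atB (hab : (a : EReal) < b) {P : ℝ → Prop}
    (hP : ∀ᶠ y in atB b, P y) {x : ℝ} (hx : x ∈ stInt a b) :
    ∃ β ∈ stInt a b, x ≤ β ∧ ∀ y ∈ stInt a b, β < y → P y := by
  obtain ⟨β, hβ, hP⟩ := (eventually_atB_iff hab).1 hP
  rcases le_total β x with hβx | hxβ
  · exact ⟨x, hx, le_rfl, fun y hy hxy => hP y hy (hβx.trans_lt hxy)⟩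
  · exact ⟨β, hβ, hxβ, hP⟩

theorem atB_neBot : (atB b).NeBot := by
  unfold atB
  split_ifs <;> infer_instance

theorem MonotoneOn.le_of_tendsto_atB {f : ℝ → ℝ} {L : ℝ} (hf : MonotoneOn f (stInt a b))
    (hL : Tendsto f (atB b) (𝓝 L)) {x : ℝ} (hx : x ∈ stInt a b) : f x ≤ L :=
  have := atB_neBot (b := b)
  ge_of_tendsto hL <| (eventually_atB_mem_gt (coe_lt_of_mem_stInt hx) hx).mono
    fun _ hy => hf hx hy.1 hy.2.le

theorem MonotoneOn.le_of_tendsto_nhdsGT {f : ℝ → ℝ} {L : ℝ} (hf : MonotoneOn f (stInt a b))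
    (hL : Tendsto f (𝓝[>] a) (𝓝 L)) {x : ℝ} (hx : x ∈ stInt a b) : L ≤ f x :=
  le_of_tendsto hL <| mem_of_superset (Ioo_mem_nhdsGT hx.1)
    fun _ hy => hf (Ioo_subset_stInt hx hy) hx hy.2.le

end StateInterval

section Primitives

variable {a : ℝ} {b : EReal} {f : ℝ → ℝ}

theorem hasDerivAt_intervalIntegral_of_continuousOn (hf : ContinuousOn f (stInt a b))
    {x₀ x : ℝ} (hx₀ : x₀ ∈ stInt a b) (hx : x ∈ stInt a b) :
    HasDerivAt (fun t => ∫ u in x₀..t, f u) (f x) x :=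
  intervalIntegral.integral_hasDerivAt_right
    ((hf.mono (ordConnected_stInt.uIcc_subset hx₀ hx)).intervalIntegrable)
    (hf.stronglyMeasurableAtFilter isOpen_stInt x hx)
    (hf.continuousAt (isOpen_stInt.mem_nhds hx))

theorem setIntegral_Ioo_eq_intervalIntegral {x : ℝ} (hax : a ≤ x) :
    ∫ u in Ioo a x, f u = ∫ u in a..x, f u := by
  rw [intervalIntegral.integral_of_le hax, integral_Ioc_eq_integral_Ioo]

theorem hasDerivAt_setIntegral_Ioo (hf : ∀ y ∈ stInt a b, IntegrableOn f (Ioo a y))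
    (hfc : ContinuousOn f (stInt a b)) {x : ℝ} (hx : x ∈ stInt a b) :
    HasDerivAt (fun t => ∫ u in Ioo a t, f u) (f x) x := by
  have hev : (fun t => ∫ u in Ioo a t, f u) =ᶠ[𝓝 x] fun t => ∫ u in a..t, f u :=
    (eventually_gt_nhds hx.1).mono fun t ht => setIntegral_Ioo_eq_intervalIntegral (le_of_lt ht)
  refine (intervalIntegral.integral_hasDerivAt_right ?_ ?_ ?_).congr_of_eventuallyEq hev
  · exact (intervalIntegrable_iff_integrableOn_Ioo_of_le hx.1.le).2 (hf x hx)
  · exact hfc.stronglyMeasurableAtFilter isOpen_stInt x hx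
  · exact hfc.continuousAt (isOpen_stInt.mem_nhds hx)

theorem tendsto_setIntegral_Ioo_nhdsGT {x : ℝ} (hax : a < x) (hf : IntegrableOn f (Ioo a x)) :
    Tendsto (fun t => ∫ u in Ioo a t, f u) (𝓝[>] a) (𝓝 0) := by
  have hf' : IntegrableOn f (uIcc a x) := by
    rwa [uIcc_of_le hax.le, integrableOn_Icc_iff_integrableOn_Ioo]
  have hcont := (intervalIntegral.continuousOn_primitive_interval hf').continuousWithinAt
    left_mem_uIcc
  rw [uIcc_of_le hax.le] at hcont
  have hlim := (hcont.mono_of_mem_nhdsWithin (Icc_mem_nhdsGT hax)).tendsto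
  rw [intervalIntegral.integral_same] at hlim
  exact hlim.congr' <| eventually_nhdsWithin_of_forall fun t ht =>
    (setIntegral_Ioo_eq_intervalIntegral (le_of_lt ht)).symm

theorem tendsto_setIntegral_Ioo_atB (hab : (a : EReal) < b) (hf : IntegrableOn f (stInt a b)) :
    Tendsto (fun t => ∫ u in Ioo a t, f u) (atB b) (𝓝 (∫ u in stInt a b, f u)) := by
  have : (atB b).IsCountablyGenerated := by
    unfold atB
    split_ifs <;> infer_instance
  have hind : ∀ᶠ t in atB b,
      ∫ u in stInt a b, (Ioo a t).indicator f u = ∫ u in Ioo a t, f u := by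
    obtain ⟨x, hx⟩ := nonempty_stInt hab
    filter_upwards [eventually_atB_mem_gt hab hx] with t ht
    rw [integral_indicator measurableSet_Ioo, Measure.restrict_restrict measurableSet_Ioo,
      inter_eq_left.2 (Ioo_subset_stInt ht.1)]
  refine (tendsto_integral_filter_of_dominated_convergence (fun u => ‖f u‖)
    (Eventually.of_forall fun _ => hf.aestronglyMeasurable.indicator measurableSet_Ioo)
    (Eventually.of_forall fun _ => ae_of_all _ fun _ => norm_indicator_le_norm_self _ _)
    hf.norm ?_).congr' hind
  refine (ae_restrict_iff' isOpen_stInt.measurableSet).2 (ae_of_all _ fun u hu => ?_)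
  refine tendsto_const_nhds.congr' ?_
  filter_upwards [eventually_atB_mem_gt hab hu] with t ht
  exact (indicator_of_mem (show u ∈ Ioo a t from ⟨hu.1, ht.2⟩) f).symm

theorem integrableOn_mul_stInt_of_monotoneOn {c m : ℝ → ℝ} {ca cb : ℝ}
    (hm : IntegrableOn m (stInt a b)) (hc : ContinuousOn c (stInt a b))
    (hcmono : MonotoneOn c (stInt a b))
    (hca : Tendsto c (𝓝[>] a) (𝓝 ca)) (hcb : Tendsto c (atB b) (𝓝 cb)) :
    IntegrableOn (fun u => c u * m u) (stInt a b) :=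
  hm.bdd_mul (hc.aestronglyMeasurable isOpen_stInt.measurableSet)
    ((ae_restrict_iff' isOpen_stInt.measurableSet).2 <| ae_of_all _ fun _ hu =>
      abs_le_max_abs_abs (hcmono.le_of_tendsto_nhdsGT hca hu) (hcmono.le_of_tendsto_atB hcb hu))

end Primitives

section IncrementRatio

def incrRatio (φ ξ : ℝ → ℝ) (K w y : ℝ) : ℝ := (φ y - φ w - K) / (ξ y - ξ w)

variable {a : ℝ} {b : EReal} {φ ξ Ψ : ℝ → ℝ} {K : ℝ}

theorem le_incrRatio_iff {F₀ w y : ℝ} (hξ : ξ w < ξ y) :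
    F₀ ≤ incrRatio φ ξ K w y ↔ K ≤ (φ y - F₀ * ξ y) - (φ w - F₀ * ξ w) := by
  rw [incrRatio, le_div_iff₀ (sub_pos.2 hξ)]
  constructor <;> intro h <;> linarith

theorem incrRatio_eq_of_isMaxOn {I : Set ℝ} (hI : IsOpen I) {h ξ' : ℝ → ℝ}
    (hφ : ∀ x ∈ I, HasDerivAt φ (h x * ξ' x) x) (hξ : ∀ x ∈ I, HasDerivAt ξ (ξ' x) x)
    (hξ' : ∀ x ∈ I, ξ' x ≠ 0) {w' y' : ℝ} (hw' : w' ∈ I) (hy' : y' ∈ I) (hwy' : w' < y')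
    (hξwy : ξ w' ≠ ξ y')
    (hmax : ∀ w ∈ I, ∀ y ∈ I, w < y → incrRatio φ ξ K w y ≤ incrRatio φ ξ K w' y') :
    incrRatio φ ξ K w' y' = h w' ∧ incrRatio φ ξ K w' y' = h y' := by
  constructor
  · have hloc : IsLocalMax (fun w => incrRatio φ ξ K w y') w' :=
      Filter.mem_of_superset ((hI.inter isOpen_Iio).mem_nhds ⟨hw', hwy'⟩)
        fun w hw => hmax w hw.1 y' hy' hw.2
    have := hloc.div_eq_div_of_hasDerivAt (((hφ w' hw').const_sub (φ y')).sub_const K)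
      ((hξ w' hw').const_sub (ξ y')) (sub_ne_zero.2 hξwy.symm) (neg_ne_zero.2 (hξ' w' hw'))
    rw [incrRatio, this, neg_div_neg_eq, mul_div_cancel_right₀ _ (hξ' w' hw')]
  · have hloc : IsLocalMax (fun y => incrRatio φ ξ K w' y) y' :=
      Filter.mem_of_superset ((hI.inter isOpen_Ioi).mem_nhds ⟨hy', hwy'⟩)
        fun y hy => hmax w' hw' y hy.1 hy.2
    have := hloc.div_eq_div_of_hasDerivAt (((hφ y' hy').sub_const (φ w')).sub_const K)
      ((hξ y' hy').sub_const (ξ w')) (sub_ne_zero.2 hξwy.symm) (hξ' y' hy')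
    rw [incrRatio, this, mul_div_cancel_right₀ _ (hξ' y' hy')]

theorem continuousOn_incrRatio {s : Set ℝ} (hφ : ContinuousOn φ s) (hξ : ContinuousOn ξ s)
    (hξmono : StrictMonoOn ξ s) :
    ContinuousOn (fun q : ℝ × ℝ => incrRatio φ ξ K q.1 q.2) {q | q.1 ∈ s ∧ q.2 ∈ s ∧ q.1 < q.2} :=
  (((hφ.comp continuousOn_snd fun _ hq => hq.2.1).sub
    (hφ.comp continuousOn_fst fun _ hq => hq.1)).sub continuousOn_const).div
    ((hξ.comp continuousOn_snd fun _ hq => hq.2.1).sub (hξ.comp continuousOn_fst fun _ hq => hq.1))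
    fun _ hq => (sub_pos.2 (hξmono hq.1 hq.2.1 hq.2.2)).ne'

theorem exists_Icc_of_le_sub (hK : 0 < K) (hΨ : ContinuousOn Ψ (stInt a b))
    {α β : ℝ} (hα : α ∈ stInt a b) (hβ : β ∈ stInt a b) (hαβ : α ≤ β)
    (hleft : AntitoneOn Ψ (stInt a b ∩ Iic α)) (hright : AntitoneOn Ψ (stInt a b ∩ Ici β))
    (hΨa : Tendsto Ψ (𝓝[>] a) atTop) (hΨb : Tendsto Ψ (atB b) atBot) :
    ∃ w₂ ∈ stInt a b, ∃ y₂ ∈ stInt a b, ∀ w ∈ stInt a b, ∀ y ∈ stInt a b, w < y →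
      K ≤ Ψ y - Ψ w → w ∈ Icc w₂ y₂ ∧ y ∈ Icc w₂ y₂ := by
  obtain ⟨xM, -, hxM⟩ := isCompact_Icc.exists_isMaxOn (nonempty_Icc.2 hαβ)
    (hΨ.mono (ordConnected_stInt.out hα hβ))
  have hle_max : ∀ y ∈ stInt a b, α < y → Ψ y ≤ Ψ xM := by
    intro y hy hαy
    rcases le_total y β with hyβ | hβy
    · exact isMaxOn_iff.1 hxM y ⟨hαy.le, hyβ⟩
    · exact (hright ⟨hβ, self_mem_Ici⟩ ⟨hy, hβy⟩ hβy).trans (isMaxOn_iff.1 hxM β ⟨hαβ, le_rfl⟩)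
  obtain ⟨w₂, hw₂, hw₂α, hw₂P⟩ :=
    exists_forall_lt_of_eventually_nhdsGT (hΨa.eventually_gt_atTop (Ψ xM - K)) hα
  obtain ⟨xm, -, hxm⟩ := isCompact_Icc.exists_isMinOn (nonempty_Icc.2 (hw₂α.trans hαβ))
    (hΨ.mono (ordConnected_stInt.out hw₂ hβ))
  obtain ⟨y₂, hy₂, -, hy₂P⟩ := exists_forall_gt_of_eventually_atB (coe_lt_of_mem_stInt hβ)
    (hΨb.eventually_lt_atBot (Ψ xm + K)) hβ
  refine ⟨w₂, hw₂, y₂, hy₂, fun w hw y hy hwy hincr => ?_⟩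
  have hαy : α < y := lt_of_not_ge fun hyα => by
    have := hleft ⟨hw, hwy.le.trans hyα⟩ ⟨hy, hyα⟩ hwy.le
    linarith
  have hwβ : w < β := lt_of_not_ge fun hβw => by
    have := hright ⟨hw, hβw⟩ ⟨hy, hβw.trans hwy.le⟩ hwy.le
    linarith
  have hw₂w : w₂ ≤ w := le_of_not_gt fun hww₂ => by
    linarith [hw₂P w hw hww₂, hle_max y hy hαy]
  have hyy₂ : y ≤ y₂ := le_of_not_gt fun hy₂y => by
    linarith [hy₂P y hy hy₂y, isMinOn_iff.1 hxm w ⟨hw₂w, hwβ.le⟩]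
  exact ⟨⟨hw₂w, hwy.le.trans hyy₂⟩, ⟨hw₂w.trans hwy.le, hyy₂⟩⟩

theorem isCompact_increment_superlevel {w₂ y₂ : ℝ} (hΨ : ContinuousOn Ψ (Icc w₂ y₂)) :
    IsCompact (Icc w₂ y₂ ×ˢ Icc w₂ y₂ ∩
      (fun q : ℝ × ℝ => (q.2 - q.1, Ψ q.2 - Ψ q.1)) ⁻¹' (Ici 0 ×ˢ Ici K)) := by
  refine (isCompact_Icc.prod isCompact_Icc).of_isClosed_subset ?_ inter_subset_left
  refine ContinuousOn.preimage_isClosed_of_isClosed ?_ (isClosed_Icc.prod isClosed_Icc)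
    (isClosed_Ici.prod isClosed_Ici)
  exact (continuous_snd.sub continuous_fst).continuousOn.prodMk
    ((hΨ.comp continuousOn_snd fun q hq => hq.2).sub (hΨ.comp continuousOn_fst fun q hq => hq.1))

theorem tendsto_sub_mul_nhdsGT_atTop {Θ : ℝ → ℝ} {d α : ℝ} (hα : α ∈ stInt a b)
    (hΘ : AntitoneOn Θ (stInt a b ∩ Iic α)) (hd : 0 < d) (hξ : Tendsto ξ (𝓝[>] a) atBot) :
    Tendsto (fun x => Θ x - d * ξ x) (𝓝[>] a) atTop := by
  have hlim : Tendsto (fun x => Θ α - d * ξ x) (𝓝[>] a) atTop := by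
    simpa [sub_eq_add_neg] using tendsto_atTop_add_const_left _ (Θ α)
      (tendsto_neg_atBot_atTop.comp (hξ.const_mul_atBot hd))
  refine tendsto_atTop_mono' _ (mem_of_superset (Ioo_mem_nhdsGT hα.1) fun x hx => ?_) hlim
  have hxα : x ≤ α := hx.2.le
  show Θ α - d * ξ x ≤ Θ x - d * ξ x
  linarith [hΘ ⟨Ioo_subset_stInt hα hx, hxα⟩ ⟨hα, self_mem_Iic⟩ hxα]

theorem tendsto_sub_mul_atB_atBot {Θ : ℝ → ℝ} {d β : ℝ} (hβ : β ∈ stInt a b)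
    (hΘ : AntitoneOn Θ (stInt a b ∩ Ici β)) (hd : 0 < d) (hξ : Tendsto ξ (atB b) atTop) :
    Tendsto (fun x => Θ x - d * ξ x) (atB b) atBot := by
  have hlim : Tendsto (fun x => Θ β - d * ξ x) (atB b) atBot := by
    simpa [sub_eq_add_neg] using tendsto_atBot_add_const_left _ (Θ β)
      (tendsto_neg_atTop_atBot.comp (hξ.const_mul_atTop hd))
  refine tendsto_atBot_mono' _ ?_ hlim
  filter_upwards [eventually_atB_mem_gt (coe_lt_of_mem_stInt hβ) hβ] with x hx
  linarith [hΘ ⟨hβ, self_mem_Ici⟩ ⟨hx.1, hx.2.le⟩ hx.2.le]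

theorem exists_isMaxOn_incrRatio_of_superlevel_subset_Icc (hK : 0 < K)
    (hφ : ContinuousOn φ (stInt a b)) (hξ : ContinuousOn ξ (stInt a b))
    (hξmono : StrictMonoOn ξ (stInt a b)) {w₀ y₀ w₂ y₂ : ℝ} (hw₀ : w₀ ∈ stInt a b)
    (hy₀ : y₀ ∈ stInt a b) (hwy₀ : w₀ < y₀) (hw₂ : w₂ ∈ stInt a b) (hy₂ : y₂ ∈ stInt a b)
    (hbox : ∀ w ∈ stInt a b, ∀ y ∈ stInt a b, w < y →
      incrRatio φ ξ K w₀ y₀ ≤ incrRatio φ ξ K w y → w ∈ Icc w₂ y₂ ∧ y ∈ Icc w₂ y₂) :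
    ∃ w' ∈ stInt a b, ∃ y' ∈ stInt a b, w' < y' ∧ ∀ w ∈ stInt a b, ∀ y ∈ stInt a b, w < y →
      incrRatio φ ξ K w y ≤ incrRatio φ ξ K w' y' := by
  set F₀ := incrRatio φ ξ K w₀ y₀
  set Ψ : ℝ → ℝ := fun x => φ x - F₀ * ξ x
  have hboxI : Icc w₂ y₂ ⊆ stInt a b := ordConnected_stInt.out hw₂ hy₂
  set D : Set (ℝ × ℝ) := {q | q.1 ∈ stInt a b ∧ q.2 ∈ stInt a b ∧ q.1 < q.2}
  set S : Set (ℝ × ℝ) := Icc w₂ y₂ ×ˢ Icc w₂ y₂ ∩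
    (fun q : ℝ × ℝ => (q.2 - q.1, Ψ q.2 - Ψ q.1)) ⁻¹' (Ici 0 ×ˢ Ici K)
  have hSD : S ⊆ D := by
    rintro ⟨w, y⟩ ⟨⟨hw, hy⟩, hwy, hincr⟩
    refine ⟨hboxI hw, hboxI hy, lt_of_le_of_ne (sub_nonneg.1 hwy) fun hweq => ?_⟩
    have hincr' : K ≤ Ψ y - Ψ w := hincr
    rw [show w = y from hweq, sub_self] at hincr'
    linarith
  have hsuper : ∀ q ∈ D, F₀ ≤ incrRatio φ ξ K q.1 q.2 → q ∈ S := by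
    rintro ⟨w, y⟩ ⟨hw, hy, hwy⟩ hle
    exact ⟨hbox w hw y hy hwy hle, sub_nonneg.2 hwy.le,
      (le_incrRatio_iff (hξmono hw hy hwy)).1 hle⟩
  obtain ⟨⟨w', y'⟩, ⟨hw', hy', hwy'⟩, hmax⟩ := exists_isMaxOn_of_superlevel_subset
    (isCompact_increment_superlevel ((hφ.sub (hξ.const_mul F₀)).mono hboxI)) hSD
    ((continuousOn_incrRatio hφ hξ hξmono).mono hSD) (show (w₀, y₀) ∈ D from ⟨hw₀, hy₀, hwy₀⟩)
    hsuper
  exact ⟨w', hw', y', hy', hwy', fun w hw y hy hwy => hmax (show (w, y) ∈ D from ⟨hw, hy, hwy⟩)⟩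

theorem exists_isMaxOn_incrRatio (hK : 0 < K) (hφ : ContinuousOn φ (stInt a b))
    (hξ : ContinuousOn ξ (stInt a b)) (hξmono : StrictMonoOn ξ (stInt a b))
    (hξa : Tendsto ξ (𝓝[>] a) atBot) (hξb : Tendsto ξ (atB b) atTop) {r α β : ℝ}
    (hα : α ∈ stInt a b) (hβ : β ∈ stInt a b)
    (hleft : AntitoneOn (fun x => φ x - r * ξ x) (stInt a b ∩ Iic α))
    (hright : AntitoneOn (fun x => φ x - r * ξ x) (stInt a b ∩ Ici β))
    {w₀ y₀ : ℝ} (hw₀ : w₀ ∈ stInt a b) (hy₀ : y₀ ∈ stInt a b) (hwy₀ : w₀ < y₀)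
    (hr : r < incrRatio φ ξ K w₀ y₀) :
    ∃ w' ∈ stInt a b, ∃ y' ∈ stInt a b, w' < y' ∧ ∀ w ∈ stInt a b, ∀ y ∈ stInt a b, w < y →
      incrRatio φ ξ K w y ≤ incrRatio φ ξ K w' y' := by
  set F₀ := incrRatio φ ξ K w₀ y₀
  have hd : 0 < F₀ - r := sub_pos.2 hr
  have hanti : ∀ s ⊆ stInt a b, AntitoneOn (fun x => φ x - r * ξ x) s →
      AntitoneOn (fun x => (φ x - r * ξ x) - (F₀ - r) * ξ x) s :=
    fun s hs hΘ x hx y hy hxy => sub_le_sub (hΘ hx hy hxy)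
      (mul_le_mul_of_nonneg_left (hξmono.monotoneOn (hs hx) (hs hy) hxy) hd.le)
  have hα' : min α β ∈ stInt a b := mem_stInt_of_le hα (lt_min hα.1 hβ.1) (min_le_left α β)
  have hleft' := hleft.mono (inter_subset_inter_right _ (Iic_subset_Iic.2 (min_le_left α β)))
  obtain ⟨w₂, hw₂, y₂, hy₂, hbox⟩ :=
    exists_Icc_of_le_sub (Ψ := fun x => (φ x - r * ξ x) - (F₀ - r) * ξ x) hK
    ((hφ.sub (hξ.const_mul r)).sub (hξ.const_mul _)) hα' hβ (min_le_right α β)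
    (hanti _ inter_subset_left hleft') (hanti _ inter_subset_left hright)
    (tendsto_sub_mul_nhdsGT_atTop hα' hleft' hd hξa) (tendsto_sub_mul_atB_atBot hβ hright hd hξb)
  refine exists_isMaxOn_incrRatio_of_superlevel_subset_Icc hK hφ hξ hξmono hw₀ hy₀ hwy₀ hw₂ hy₂
    fun w hw y hy hwy hle => hbox w hw y hy hwy ?_
  rw [le_incrRatio_iff (hξmono hw hy hwy)] at hle
  linarith

end IncrementRatio

theorem sDen_pos (μ σ : ℝ → ℝ) (x₀ x : ℝ) : 0 < sDen μ σ x₀ x := Real.exp_pos _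

def rewardPot (μ σ c : ℝ → ℝ) (x₀ a p γ x : ℝ) : ℝ := p * x + γ * gF μ σ c x₀ a x

structure IsRegularDiffusion (a : ℝ) (b : EReal) (μ σ : ℝ → ℝ) (x₀ : ℝ) : Prop where
  x₀_mem : x₀ ∈ stInt a b
  continuousOn_drift : ContinuousOn μ (stInt a b)
  continuousOn_vol : ContinuousOn σ (stInt a b)
  sq_vol_pos : ∀ x ∈ stInt a b, 0 < σ x ^ 2
  integrableOn_mDen : ∀ x ∈ stInt a b, IntegrableOn (mDen μ σ x₀) (Ioo a x)

namespace IsRegularDiffusion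

variable {a : ℝ} {b : EReal} {μ σ c : ℝ → ℝ} {x₀ ca cb p γ r K : ℝ}
  (hD : IsRegularDiffusion a b μ σ x₀)
include hD

theorem coe_lt : (a : EReal) < b := coe_lt_of_mem_stInt hD.x₀_mem

theorem hasDerivAt_sDen {x : ℝ} (hx : x ∈ stInt a b) :
    HasDerivAt (sDen μ σ x₀) (-(2 * μ x / σ x ^ 2) * sDen μ σ x₀ x) x := by
  have hcont : ContinuousOn (fun y => 2 * μ y / σ y ^ 2) (stInt a b) :=
    (continuousOn_const.mul hD.continuousOn_drift).div (hD.continuousOn_vol.pow 2)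
      fun y hy => (hD.sq_vol_pos y hy).ne'
  rw [mul_comm]
  exact (hasDerivAt_intervalIntegral_of_continuousOn hcont hD.x₀_mem hx).neg.exp

theorem continuousOn_sDen : ContinuousOn (sDen μ σ x₀) (stInt a b) :=
  fun _ hx => (hD.hasDerivAt_sDen hx).continuousAt.continuousWithinAt

theorem hasDerivAt_inv_sDen {x : ℝ} (hx : x ∈ stInt a b) :
    HasDerivAt (fun t => (sDen μ σ x₀ t)⁻¹) (μ x * mDen μ σ x₀ x) x := by
  refine ((hD.hasDerivAt_sDen hx).inv (sDen_pos μ σ x₀ x).ne').congr_deriv ?_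
  have := (hD.sq_vol_pos x hx).ne'
  have := (sDen_pos μ σ x₀ x).ne'
  rw [mDen]
  field_simp

theorem mDen_pos {x : ℝ} (hx : x ∈ stInt a b) : 0 < mDen μ σ x₀ x :=
  div_pos two_pos (mul_pos (hD.sq_vol_pos x hx) (sDen_pos μ σ x₀ x))

theorem continuousOn_mDen : ContinuousOn (mDen μ σ x₀) (stInt a b) :=
  continuousOn_const.div ((hD.continuousOn_vol.pow 2).mul hD.continuousOn_sDen)
    fun x hx => (mul_pos (hD.sq_vol_pos x hx) (sDen_pos μ σ x₀ x)).ne'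

theorem hasDerivAt_Mab {x : ℝ} (hx : x ∈ stInt a b) :
    HasDerivAt (Mab μ σ x₀ a) (mDen μ σ x₀ x) x :=
  hasDerivAt_setIntegral_Ioo hD.integrableOn_mDen hD.continuousOn_mDen hx

theorem continuousOn_Mab : ContinuousOn (Mab μ σ x₀ a) (stInt a b) :=
  fun _ hx => (hD.hasDerivAt_Mab hx).continuousAt.continuousWithinAt

theorem Mab_pos {x : ℝ} (hx : x ∈ stInt a b) : 0 < Mab μ σ x₀ a x := by
  rw [Mab, setIntegral_Ioo_eq_intervalIntegral hx.1.le]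
  exact intervalIntegral.intervalIntegral_pos_of_pos_on
    ((intervalIntegrable_iff_integrableOn_Ioo_of_le hx.1.le).2 (hD.integrableOn_mDen x hx))
    (fun u hu => hD.mDen_pos (Ioo_subset_stInt hx hu)) hx.1

theorem hasDerivAt_xiF {x : ℝ} (hx : x ∈ stInt a b) :
    HasDerivAt (xiF μ σ x₀ a) (Mab μ σ x₀ a x * sDen μ σ x₀ x) x :=
  hasDerivAt_intervalIntegral_of_continuousOn (hD.continuousOn_Mab.mul hD.continuousOn_sDen)
    hD.x₀_mem hx

theorem continuousOn_xiF : ContinuousOn (xiF μ σ x₀ a) (stInt a b) :=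
  fun _ hx => (hD.hasDerivAt_xiF hx).continuousAt.continuousWithinAt

theorem strictMonoOn_xiF : StrictMonoOn (xiF μ σ x₀ a) (stInt a b) :=
  strictMonoOn_of_hasDerivWithinAt_pos convex_stInt hD.continuousOn_xiF
    (fun _ hx => (hD.hasDerivAt_xiF (interior_subset hx)).hasDerivWithinAt)
    fun x hx => mul_pos (hD.Mab_pos (interior_subset hx)) (sDen_pos μ σ x₀ x)

theorem integrableOn_mul_mDen_of_tendsto {f : ℝ → ℝ} {L : ℝ} (hf : ContinuousOn f (stInt a b))
    (hfa : Tendsto f (𝓝[>] a) (𝓝 L)) {x : ℝ} (hx : x ∈ stInt a b) :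
    IntegrableOn (fun u => f u * mDen μ σ x₀ u) (Ioo a x) := by
  obtain ⟨t, ht, htx, hbound⟩ := exists_forall_lt_of_eventually_nhdsGT
    (hfa.norm.eventually (gt_mem_nhds (lt_add_one ‖L‖))) hx
  have hnear : IntegrableOn (fun u => f u * mDen μ σ x₀ u) (Ioo a t) :=
    (hD.integrableOn_mDen t ht).bdd_mul
      ((hf.mono (Ioo_subset_stInt ht)).aestronglyMeasurable measurableSet_Ioo)
      ((ae_restrict_iff' measurableSet_Ioo).2 <| ae_of_all _ fun u hu =>
        (hbound u (Ioo_subset_stInt ht hu) hu.2).le)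
  have hfar : IntegrableOn (fun u => f u * mDen μ σ x₀ u) (Icc t x) :=
    ((hf.mul hD.continuousOn_mDen).mono (ordConnected_stInt.out ht hx)).integrableOn_Icc
  exact (hnear.union hfar).mono_set fun u hu =>
    (lt_or_ge u t).imp (fun h => ⟨hu.1, h⟩) fun h => ⟨h, hu.2.le⟩

theorem setIntegral_drift_mul_mDen {μa : ℝ} (hμa : Tendsto μ (𝓝[>] a) (𝓝 μa))
    (hsa : Tendsto (sDen μ σ x₀) (𝓝[>] a) atTop) {x : ℝ} (hx : x ∈ stInt a b) :
    ∫ u in Ioo a x, μ u * mDen μ σ x₀ u = (sDen μ σ x₀ x)⁻¹ := by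
  have hint : ∀ y ∈ stInt a b, IntegrableOn (fun u => μ u * mDen μ σ x₀ u) (Ioo a y) :=
    fun y hy => hD.integrableOn_mul_mDen_of_tendsto hD.continuousOn_drift hμa hy
  have hA : ∀ t ∈ stInt a b,
      HasDerivAt (fun t => ∫ u in Ioo a t, μ u * mDen μ σ x₀ u) (μ t * mDen μ σ x₀ t) t :=
    fun t ht => hasDerivAt_setIntegral_Ioo hint
      (hD.continuousOn_drift.mul hD.continuousOn_mDen) ht
  obtain ⟨C, hC⟩ := isOpen_stInt.exists_eq_add_of_deriv_eq convex_stInt.isPreconnected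
    (fun t ht => (hA t ht).differentiableAt.differentiableWithinAt)
    (fun t ht => (hD.hasDerivAt_inv_sDen ht).differentiableAt.differentiableWithinAt)
    fun t ht => by simp only [(hA t ht).deriv, (hD.hasDerivAt_inv_sDen ht).deriv]
  have hlim := (tendsto_setIntegral_Ioo_nhdsGT hx.1 (hint x hx)).sub hsa.inv_tendsto_atTop
  have hC0 : C = 0 := by
    refine tendsto_nhds_unique (tendsto_const_nhds.congr' ?_) (by simpa using hlim)
    filter_upwards [Ioo_mem_nhdsGT hx.1] with t ht
    simp only [hC (Ioo_subset_stInt hx ht), add_sub_cancel_left]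
  simpa [hC0] using hC hx

theorem drift_limit_nonneg {μa : ℝ} (hμa : Tendsto μ (𝓝[>] a) (𝓝 μa))
    (hsa : Tendsto (sDen μ σ x₀) (𝓝[>] a) atTop) : 0 ≤ μa := by
  by_contra! hneg
  obtain ⟨t, ht, -, hμneg⟩ :=
    exists_forall_lt_of_eventually_nhdsGT (hμa.eventually (gt_mem_nhds hneg)) hD.x₀_mem
  have hnonpos : ∫ u in Ioo a t, μ u * mDen μ σ x₀ u ≤ 0 :=
    setIntegral_nonpos measurableSet_Ioo fun u hu => (mul_neg_of_neg_of_pos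
      (hμneg u (Ioo_subset_stInt ht hu) hu.2) (hD.mDen_pos (Ioo_subset_stInt ht hu))).le
  rw [hD.setIntegral_drift_mul_mDen hμa hsa ht] at hnonpos
  exact hnonpos.not_gt (inv_pos.2 (sDen_pos μ σ x₀ t))

theorem drift_limit_nonpos {μa : ℝ} (hμa : Tendsto μ (𝓝[>] a) (𝓝 μa))
    (hsa : Tendsto (sDen μ σ x₀) (𝓝[>] a) atTop)
    (hanat : Tendsto (xiF μ σ x₀ a) (𝓝[>] a) atBot) : μa ≤ 0 := by
  by_contra! hpos
  obtain ⟨t, ht, -, hμbig⟩ := exists_forall_lt_of_eventually_nhdsGT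
    (hμa.eventually (lt_mem_nhds (half_lt_self hpos))) hD.x₀_mem
  -- a positive drift near `a` caps the growth rate `M s` of `ξ`, so `ξ` stays bounded below
  have hrate : ∀ x ∈ Ioo a t, Mab μ σ x₀ a x * sDen μ σ x₀ x ≤ 2 / μa := by
    intro x hx
    have hxI := Ioo_subset_stInt ht hx
    have hle := const_mul_le_setIntegral_mul measurableSet_Ioo
      (hD.integrableOn_mul_mDen_of_tendsto hD.continuousOn_drift hμa hxI)
      (hD.integrableOn_mDen x hxI) (fun u hu => (hD.mDen_pos (Ioo_subset_stInt hxI hu)).le)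
      fun u hu => (hμbig u (Ioo_subset_stInt hxI hu) (hu.2.trans hx.2)).le
    rw [hD.setIntegral_drift_mul_mDen hμa hsa hxI, ← Mab] at hle
    have hs := sDen_pos μ σ x₀ x
    rw [le_div_iff₀ hpos]
    calc Mab μ σ x₀ a x * sDen μ σ x₀ x * μa
        = 2 * (μa / 2 * Mab μ σ x₀ a x) * sDen μ σ x₀ x := by ring
      _ ≤ 2 * (sDen μ σ x₀ x)⁻¹ * sDen μ σ x₀ x := by gcongr
      _ = 2 := by field_simp
  have hlower : ∀ w ∈ Ioc a t, xiF μ σ x₀ a t - 2 / μa * (t - a) ≤ xiF μ σ x₀ a w := by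
    intro w hw
    have hIoc : Ioc a t ⊆ stInt a b := fun u hu => mem_stInt_of_le ht hu.1 hu.2
    have := convex_Ioc a t |>.image_sub_le_mul_sub_of_deriv_le
      (hD.continuousOn_xiF.mono hIoc)
      (fun x hx => (hD.hasDerivAt_xiF (hIoc (Ioo_subset_Ioc_self (by rwa [interior_Ioc] at hx)))
        ).differentiableAt.differentiableWithinAt)
      (fun x hx => by
        rw [interior_Ioc] at hx
        rw [(hD.hasDerivAt_xiF (hIoc (Ioo_subset_Ioc_self hx))).deriv]
        exact hrate x hx) w hw t ⟨ht.1, le_rfl⟩ hw.2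
    nlinarith [hw.1, div_pos two_pos hpos]
  obtain ⟨w, hw, hwt⟩ := ((hanat.eventually_lt_atBot (xiF μ σ x₀ a t - 2 / μa * (t - a))).and
    (Ioc_mem_nhdsGT ht.1)).exists
  exact (hlower w hwt).not_gt hw

theorem hasDerivAt_gF (hc : ContinuousOn c (stInt a b)) (hca : Tendsto c (𝓝[>] a) (𝓝 ca))
    {x : ℝ} (hx : x ∈ stInt a b) :
    HasDerivAt (gF μ σ c x₀ a) ((∫ u in Ioo a x, c u * mDen μ σ x₀ u) * sDen μ σ x₀ x) x := by
  have hAc : ContinuousOn (fun v => ∫ u in Ioo a v, c u * mDen μ σ x₀ u) (stInt a b) :=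
    fun _ hy => (hasDerivAt_setIntegral_Ioo
      (fun _ hz => hD.integrableOn_mul_mDen_of_tendsto hc hca hz)
      (hc.mul hD.continuousOn_mDen) hy).continuousAt.continuousWithinAt
  exact hasDerivAt_intervalIntegral_of_continuousOn (hAc.mul hD.continuousOn_sDen) hD.x₀_mem hx

theorem hF_eq (hc : ContinuousOn c (stInt a b)) (hca : Tendsto c (𝓝[>] a) (𝓝 ca)) {μa : ℝ}
    (hμa : Tendsto μ (𝓝[>] a) (𝓝 μa)) (hsa : Tendsto (sDen μ σ x₀) (𝓝[>] a) atTop)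
    (p γ : ℝ) {x : ℝ} (hx : x ∈ stInt a b) :
    hF μ σ c x₀ a p γ x = (γ * (∫ u in Ioo a x, c u * mDen μ σ x₀ u) +
      p * (sDen μ σ x₀ x)⁻¹) / Mab μ σ x₀ a x := by
  rw [hF, ← hD.setIntegral_drift_mul_mDen hμa hsa hx, ← integral_const_mul, ← integral_const_mul,
    ← integral_add]
  · simp only [add_mul, mul_assoc]
  · exact (hD.integrableOn_mul_mDen_of_tendsto hc hca hx).const_mul γ
  · exact (hD.integrableOn_mul_mDen_of_tendsto hD.continuousOn_drift hμa hx).const_mul p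

theorem hasDerivAt_reward (hc : ContinuousOn c (stInt a b)) (hca : Tendsto c (𝓝[>] a) (𝓝 ca))
    {μa : ℝ} (hμa : Tendsto μ (𝓝[>] a) (𝓝 μa)) (hsa : Tendsto (sDen μ σ x₀) (𝓝[>] a) atTop)
    (p γ : ℝ) {x : ℝ} (hx : x ∈ stInt a b) :
    HasDerivAt (rewardPot μ σ c x₀ a p γ)
      (hF μ σ c x₀ a p γ x * (Mab μ σ x₀ a x * sDen μ σ x₀ x)) x := by
  refine (((hasDerivAt_id x).const_mul p).add
    ((hD.hasDerivAt_gF hc hca hx).const_mul γ)).congr_deriv ?_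
  have := (hD.Mab_pos hx).ne'
  have := (sDen_pos μ σ x₀ x).ne'
  rw [hD.hF_eq hc hca hμa hsa p γ hx]
  field_simp
  ring

theorem exists_hF_le_left (hc : ContinuousOn c (stInt a b)) (hca : Tendsto c (𝓝[>] a) (𝓝 ca))
    (hμa : Tendsto μ (𝓝[>] a) (𝓝 0)) (hr : γ * ca < r) :
    ∃ α ∈ stInt a b, ∀ x ∈ stInt a b, x < α → hF μ σ c x₀ a p γ x ≤ r := by
  have hk : Tendsto (fun u => γ * c u + p * μ u) (𝓝[>] a) (𝓝 (γ * ca)) := by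
    simpa using (hca.const_mul γ).add (hμa.const_mul p)
  obtain ⟨α, hα, -, hkr⟩ :=
    exists_forall_lt_of_eventually_nhdsGT (hk.eventually (gt_mem_nhds hr)) hD.x₀_mem
  refine ⟨α, hα, fun x hx hxα => ?_⟩
  rw [hF, div_le_iff₀ (hD.Mab_pos hx)]
  exact setIntegral_mul_le_const_mul measurableSet_Ioo
    (hD.integrableOn_mul_mDen_of_tendsto ((hc.const_mul γ).add
      (hD.continuousOn_drift.const_mul p)) hk hx)
    (hD.integrableOn_mDen x hx) (fun u hu => (hD.mDen_pos (Ioo_subset_stInt hx hu)).le)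
    fun u hu => (hkr u (Ioo_subset_stInt hx hu) (hu.2.trans hxα)).le

theorem setIntegral_mDen_stInt_pos (hm : IntegrableOn (mDen μ σ x₀) (stInt a b)) :
    0 < ∫ u in stInt a b, mDen μ σ x₀ u :=
  (hD.Mab_pos hD.x₀_mem).trans_le <| setIntegral_mono_set hm
    ((ae_restrict_iff' isOpen_stInt.measurableSet).2 <| ae_of_all _ fun _ hu =>
      (hD.mDen_pos hu).le) (Ioo_subset_stInt hD.x₀_mem).eventuallyLE

theorem le_cbar (hc : ContinuousOn c (stInt a b)) (hcmono : MonotoneOn c (stInt a b))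
    (hca : Tendsto c (𝓝[>] a) (𝓝 ca)) (hcb : Tendsto c (atB b) (𝓝 cb)) :
    ca ≤ cbar μ σ c x₀ a b cb := by
  unfold cbar
  split_ifs with hm
  · rw [le_div_iff₀ (hD.setIntegral_mDen_stInt_pos hm)]
    exact const_mul_le_setIntegral_mul isOpen_stInt.measurableSet
      (integrableOn_mul_stInt_of_monotoneOn hm hc hcmono hca hcb) hm
      (fun _ hu => (hD.mDen_pos hu).le) fun _ hu => hcmono.le_of_tendsto_nhdsGT hca hu
  · exact (hcmono.le_of_tendsto_nhdsGT hca hD.x₀_mem).trans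
      (hcmono.le_of_tendsto_atB hcb hD.x₀_mem)

theorem tendsto_hF_atB (hm : IntegrableOn (mDen μ σ x₀) (stInt a b))
    (hc : ContinuousOn c (stInt a b)) (hcmono : MonotoneOn c (stInt a b))
    (hca : Tendsto c (𝓝[>] a) (𝓝 ca)) (hcb : Tendsto c (atB b) (𝓝 cb)) {μa : ℝ}
    (hμa : Tendsto μ (𝓝[>] a) (𝓝 μa)) (hsa : Tendsto (sDen μ σ x₀) (𝓝[>] a) atTop)
    (hsMb : Tendsto (fun x => sDen μ σ x₀ x * Mab μ σ x₀ a x) (atB b) atTop) :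
    Tendsto (hF μ σ c x₀ a p γ) (atB b) (𝓝 (γ * cbar μ σ c x₀ a b cb)) := by
  have hmem := eventually_atB_mem_gt hD.coe_lt hD.x₀_mem
  have hM := tendsto_setIntegral_Ioo_atB hD.coe_lt hm
  have hinv_s : Tendsto (fun x => (sDen μ σ x₀ x)⁻¹) (atB b) (𝓝 0) := by
    refine (mul_zero (∫ u in stInt a b, mDen μ σ x₀ u) ▸
      hM.mul hsMb.inv_tendsto_atTop).congr' ?_
    filter_upwards [hmem] with x hx
    have := (hD.Mab_pos hx.1).ne'
    have := (sDen_pos μ σ x₀ x).ne'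
    simp only [Pi.inv_apply, Mab] at *
    field_simp
  have hlim := (((tendsto_setIntegral_Ioo_atB hD.coe_lt
    (integrableOn_mul_stInt_of_monotoneOn hm hc hcmono hca hcb)).const_mul γ).add
    (hinv_s.const_mul p)).div hM (hD.setIntegral_mDen_stInt_pos hm).ne'
  rw [mul_zero, add_zero, mul_div_assoc] at hlim
  rw [cbar, if_pos hm]
  refine hlim.congr' ?_
  filter_upwards [hmem] with x hx
  rw [hD.hF_eq hc hca hμa hsa p γ hx.1, Mab, Pi.div_apply]

theorem exists_hF_le_right (hc : ContinuousOn c (stInt a b))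
    (hcmono : MonotoneOn c (stInt a b)) (hca : Tendsto c (𝓝[>] a) (𝓝 ca))
    (hcb : Tendsto c (atB b) (𝓝 cb)) {μa : ℝ} (hμa : Tendsto μ (𝓝[>] a) (𝓝 μa))
    (hsa : Tendsto (sDen μ σ x₀) (𝓝[>] a) atTop)
    (hsMb : Tendsto (fun x => sDen μ σ x₀ x * Mab μ σ x₀ a x) (atB b) atTop) (hγ : 0 ≤ γ)
    (hr : γ * cbar μ σ c x₀ a b cb < r) :
    ∃ β ∈ stInt a b, ∀ x ∈ stInt a b, β < x → hF μ σ c x₀ a p γ x ≤ r := by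
  suffices hev : ∀ᶠ x in atB b, hF μ σ c x₀ a p γ x ≤ r by
    obtain ⟨β, hβ, -, hβr⟩ := exists_forall_gt_of_eventually_atB hD.coe_lt hev hD.x₀_mem
    exact ⟨β, hβ, hβr⟩
  by_cases hm : IntegrableOn (mDen μ σ x₀) (stInt a b)
  · exact (hD.tendsto_hF_atB hm hc hcmono hca hcb hμa hsa hsMb).eventually (ge_mem_nhds hr)
  rw [cbar, if_neg hm] at hr
  have hsmall : ∀ᶠ x in atB b, p * (sDen μ σ x₀ x * Mab μ σ x₀ a x)⁻¹ < r - γ * cb := by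
    have := hsMb.inv_tendsto_atTop.const_mul p
    rw [mul_zero] at this
    exact this.eventually (gt_mem_nhds (sub_pos.2 hr))
  filter_upwards [hsmall, eventually_atB_mem_gt hD.coe_lt hD.x₀_mem] with x hsmall hx
  have hM := hD.Mab_pos hx.1
  have hs := (sDen_pos μ σ x₀ x).ne'
  have hAc : ∫ u in Ioo a x, c u * mDen μ σ x₀ u ≤ cb * Mab μ σ x₀ a x :=
    setIntegral_mul_le_const_mul measurableSet_Ioo (hD.integrableOn_mul_mDen_of_tendsto hc hca hx.1)
      (hD.integrableOn_mDen x hx.1) (fun u hu => (hD.mDen_pos (Ioo_subset_stInt hx.1 hu)).le)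
      fun u hu => hcmono.le_of_tendsto_atB hcb (Ioo_subset_stInt hx.1 hu)
  have hps : p * (sDen μ σ x₀ x)⁻¹ =
      p * (sDen μ σ x₀ x * Mab μ σ x₀ a x)⁻¹ * Mab μ σ x₀ a x := by
    field_simp
  rw [hD.hF_eq hc hca hμa hsa p γ hx.1, div_le_iff₀ hM, hps]
  nlinarith [mul_le_mul_of_nonneg_left hAc hγ, mul_lt_mul_of_pos_right hsmall hM]

theorem antitoneOn_reward_sub_mul_xiF (hc : ContinuousOn c (stInt a b))
    (hca : Tendsto c (𝓝[>] a) (𝓝 ca)) {μa : ℝ} (hμa : Tendsto μ (𝓝[>] a) (𝓝 μa))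
    (hsa : Tendsto (sDen μ σ x₀) (𝓝[>] a) atTop) {s : Set ℝ} (hs : Convex ℝ s)
    (hr : ∀ x ∈ stInt a b ∩ interior s, hF μ σ c x₀ a p γ x ≤ r) :
    AntitoneOn (fun x => rewardPot μ σ c x₀ a p γ x - r * xiF μ σ x₀ a x) (stInt a b ∩ s) := by
  have hderiv : ∀ x ∈ stInt a b, HasDerivAt
      (fun x => rewardPot μ σ c x₀ a p γ x - r * xiF μ σ x₀ a x)
      ((hF μ σ c x₀ a p γ x - r) * (Mab μ σ x₀ a x * sDen μ σ x₀ x)) x := fun x hx =>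
    ((hD.hasDerivAt_reward hc hca hμa hsa p γ hx).sub
      ((hD.hasDerivAt_xiF hx).const_mul r)).congr_deriv (by ring)
  refine antitoneOn_of_hasDerivWithinAt_nonpos
    (f' := fun x => (hF μ σ c x₀ a p γ x - r) * (Mab μ σ x₀ a x * sDen μ σ x₀ x))
    (convex_stInt.inter hs)
    (fun x hx => (hderiv x hx.1).continuousAt.continuousWithinAt) (fun x hx => ?_) fun x hx => ?_
  all_goals rw [interior_inter, isOpen_stInt.interior_eq] at hx
  · exact (hderiv x hx.1).hasDerivWithinAt
  · exact mul_nonpos_of_nonpos_of_nonneg (sub_nonpos.2 (hr x hx))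
      (mul_pos (hD.Mab_pos hx.1) (sDen_pos μ σ x₀ x)).le

theorem incrRatio_eq_hF_of_isMaxOn (hc : ContinuousOn c (stInt a b))
    (hca : Tendsto c (𝓝[>] a) (𝓝 ca)) {μa : ℝ} (hμa : Tendsto μ (𝓝[>] a) (𝓝 μa))
    (hsa : Tendsto (sDen μ σ x₀) (𝓝[>] a) atTop) {w' y' : ℝ} (hw' : w' ∈ stInt a b)
    (hy' : y' ∈ stInt a b) (hwy' : w' < y')
    (hmax : ∀ w ∈ stInt a b, ∀ y ∈ stInt a b, w < y →
      incrRatio (rewardPot μ σ c x₀ a p γ) (xiF μ σ x₀ a) K w y ≤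
        incrRatio (rewardPot μ σ c x₀ a p γ) (xiF μ σ x₀ a) K w' y') :
    incrRatio (rewardPot μ σ c x₀ a p γ) (xiF μ σ x₀ a) K w' y' = hF μ σ c x₀ a p γ w' ∧
      incrRatio (rewardPot μ σ c x₀ a p γ) (xiF μ σ x₀ a) K w' y' = hF μ σ c x₀ a p γ y' :=
  incrRatio_eq_of_isMaxOn isOpen_stInt (fun _ hx => hD.hasDerivAt_reward hc hca hμa hsa p γ hx)
    (fun _ hx => hD.hasDerivAt_xiF hx)
    (fun x hx => (mul_pos (hD.Mab_pos hx) (sDen_pos μ σ x₀ x)).ne') hw' hy' hwy'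
    (hD.strictMonoOn_xiF hw' hy' hwy').ne hmax

theorem exists_isMaxOn_incrRatio_reward (hc : ContinuousOn c (stInt a b))
    (hcmono : MonotoneOn c (stInt a b)) (hca : Tendsto c (𝓝[>] a) (𝓝 ca))
    (hcb : Tendsto c (atB b) (𝓝 cb)) (hμa : Tendsto μ (𝓝[>] a) (𝓝 0))
    (hsa : Tendsto (sDen μ σ x₀) (𝓝[>] a) atTop)
    (hsMb : Tendsto (fun x => sDen μ σ x₀ x * Mab μ σ x₀ a x) (atB b) atTop)
    (hbnat : Tendsto (xiF μ σ x₀ a) (atB b) atTop)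
    (hanat : Tendsto (xiF μ σ x₀ a) (𝓝[>] a) atBot) (hK : 0 < K) (hγ : 0 ≤ γ)
    {w₀ y₀ : ℝ} (hw₀ : w₀ ∈ stInt a b) (hy₀ : y₀ ∈ stInt a b) (hwy₀ : w₀ < y₀)
    (hF₀ : γ * cbar μ σ c x₀ a b cb <
      incrRatio (rewardPot μ σ c x₀ a p γ) (xiF μ σ x₀ a) K w₀ y₀) :
    ∃ w' ∈ stInt a b, ∃ y' ∈ stInt a b, w' < y' ∧ ∀ w ∈ stInt a b, ∀ y ∈ stInt a b, w < y →
      incrRatio (rewardPot μ σ c x₀ a p γ) (xiF μ σ x₀ a) K w y ≤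
        incrRatio (rewardPot μ σ c x₀ a p γ) (xiF μ σ x₀ a) K w' y' := by
  obtain ⟨r, hcbar_r, hr_F₀⟩ := exists_between hF₀
  have hca_r : γ * ca < r :=
    (mul_le_mul_of_nonneg_left (hD.le_cbar hc hcmono hca hcb) hγ).trans_lt hcbar_r
  obtain ⟨α, hα, hαr⟩ := hD.exists_hF_le_left hc hca hμa (p := p) hca_r
  obtain ⟨β, hβ, hβr⟩ := hD.exists_hF_le_right hc hcmono hca hcb hμa hsa hsMb (p := p) hγ hcbar_r
  exact exists_isMaxOn_incrRatio hK
    (fun _ hx => (hD.hasDerivAt_reward hc hca hμa hsa p γ hx).continuousAt.continuousWithinAt)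
    hD.continuousOn_xiF hD.strictMonoOn_xiF hanat hbnat hα hβ
    (hD.antitoneOn_reward_sub_mul_xiF hc hca hμa hsa (convex_Iic α)
      fun x hx => hαr x hx.1 (by simpa using hx.2))
    (hD.antitoneOn_reward_sub_mul_xiF hc hca hμa hsa (convex_Ici β)
      fun x hx => hβr x hx.1 (by simpa using hx.2))
    hw₀ hy₀ hwy₀ hr_F₀

end IsRegularDiffusion

theorem statement11_general    (a : ℝ) (b : EReal)
    (μ σ : ℝ → ℝ) (x₀ : ℝ) (hx₀ : x₀ ∈ stInt a b)
    (hμcont : ContinuousOn μ (stInt a b)) (hσcont : ContinuousOn σ (stInt a b))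
    (hσpos : ∀ x ∈ stInt a b, 0 < (σ x) ^ 2)
    (hMfin : ∀ x ∈ stInt a b, IntegrableOn (mDen μ σ x₀) (Set.Ioo a x))
    (hsa : Tendsto (sDen μ σ x₀) (𝓝[>] a) atTop)
    (hsMb : Tendsto (fun x => sDen μ σ x₀ x * Mab μ σ x₀ a x) (atB b) atTop)
    (hbnat : Tendsto (xiF μ σ x₀ a) (atB b) atTop)
    (hanat : Tendsto (xiF μ σ x₀ a) (𝓝[>] a) atBot)
    (μa : ℝ) (hμa : Tendsto μ (𝓝[>] a) (𝓝 μa))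
    (c : ℝ → ℝ) (hccont : ContinuousOn c (stInt a b))
    (hcmono : MonotoneOn c (stInt a b))
    (ca cb : ℝ) (hca : Tendsto c (𝓝[>] a) (𝓝 ca)) (hcb : Tendsto c (atB b) (𝓝 cb))
    (p K γ : ℝ) (hK : 0 < K) (hγ : 0 < γ)
    (hint : ∃ w y : ℝ, a < w ∧ w < y ∧ (y : EReal) < b ∧
      γ * cbar μ σ c x₀ a b cb < FF μ σ c x₀ a p K γ w y) :
    (∃ w' y' : ℝ, a < w' ∧ w' < y' ∧ (y' : EReal) < b ∧
      ∀ w y : ℝ, a < w → w < y → (y : EReal) < b →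
        FF μ σ c x₀ a p K γ w y ≤ FF μ σ c x₀ a p K γ w' y') ∧
    (∀ w' y' : ℝ, a < w' → w' < y' → (y' : EReal) < b →
      (∀ w y : ℝ, a < w → w < y → (y : EReal) < b →
        FF μ σ c x₀ a p K γ w y ≤ FF μ σ c x₀ a p K γ w' y') →
      FF μ σ c x₀ a p K γ w' y' = hF μ σ c x₀ a p γ w' ∧
      FF μ σ c x₀ a p K γ w' y' = hF μ σ c x₀ a p γ y') := by
  have hD : IsRegularDiffusion a b μ σ x₀ := ⟨hx₀, hμcont, hσcont, hσpos, hMfin⟩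
  obtain rfl : μa = 0 :=
    le_antisymm (hD.drift_limit_nonpos hμa hsa hanat) (hD.drift_limit_nonneg hμa hsa)
  have hFF : ∀ w y, FF μ σ c x₀ a p K γ w y =
      incrRatio (rewardPot μ σ c x₀ a p γ) (xiF μ σ x₀ a) K w y := fun w y => by
    rw [FF, incrRatio, rewardPot, rewardPot]
    ring_nf
  have hmem : ∀ {w y : ℝ}, a < w → w < y → (y : EReal) < b → w ∈ stInt a b ∧ y ∈ stInt a b :=
    fun hw hwy hy => ⟨⟨hw, (EReal.coe_lt_coe_iff.2 hwy).trans hy⟩, ⟨hw.trans hwy, hy⟩⟩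
  simp only [hFF] at hint ⊢
  refine ⟨?_, fun w' y' hw' hwy' hy' hmax => ?_⟩
  · obtain ⟨w₀, y₀, hw₀, hwy₀, hy₀, hF₀⟩ := hint
    obtain ⟨w', hw', y', hy', hwy', hmax⟩ := hD.exists_isMaxOn_incrRatio_reward hccont hcmono
      hca hcb hμa hsa hsMb hbnat hanat hK hγ.le (hmem hw₀ hwy₀ hy₀).1 (hmem hw₀ hwy₀ hy₀).2 hwy₀ hF₀
    exact ⟨w', y', hw'.1, hwy', hy'.2, fun w y hw hwy hy =>
      hmax w (hmem hw hwy hy).1 y (hmem hw hwy hy).2 hwy⟩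
  · exact hD.incrRatio_eq_hF_of_isMaxOn hccont hca hμa hsa (hmem hw' hwy' hy').1
      (hmem hw' hwy' hy').2 hwy' fun w hw y hy hwy => hmax w y hw.1 hwy hy.2

theorem statement11    (a : ℝ) (b : EReal) (hab : (a : EReal) < b)
    (μ σ : ℝ → ℝ) (x₀ : ℝ) (hx₀ : x₀ ∈ stInt a b)
    (hμcont : ContinuousOn μ (stInt a b)) (hσcont : ContinuousOn σ (stInt a b))
    (hσpos : ∀ x ∈ stInt a b, 0 < (σ x) ^ 2)
    (hMfin : ∀ x ∈ stInt a b, IntegrableOn (mDen μ σ x₀) (Set.Ioo a x))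
    (hsa : Tendsto (sDen μ σ x₀) (𝓝[>] a) atTop)
    (hsMb : Tendsto (fun x => sDen μ σ x₀ x * Mab μ σ x₀ a x) (atB b) atTop)
    (hbnat : Tendsto (xiF μ σ x₀ a) (atB b) atTop)
    (hanat : Tendsto (xiF μ σ x₀ a) (𝓝[>] a) atBot)
    (μa : ℝ) (hμa : Tendsto μ (𝓝[>] a) (𝓝 μa))
    (c : ℝ → ℝ) (hccont : ContinuousOn c (stInt a b))
    (hcnn : ∀ x ∈ stInt a b, 0 ≤ c x) (hcmono : MonotoneOn c (stInt a b))
    (ca cb : ℝ) (hca : Tendsto c (𝓝[>] a) (𝓝 ca)) (hcb : Tendsto c (atB b) (𝓝 cb))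
    (hca0 : 0 ≤ ca) (hcacb : ca < cb)
    (p K γ : ℝ) (hp : 0 < p) (hK : 0 < K) (hγ : 0 < γ)
    (hint : ∃ w y : ℝ, a < w ∧ w < y ∧ (y : EReal) < b ∧
      γ * cbar μ σ c x₀ a b cb < FF μ σ c x₀ a p K γ w y) :
    (∃ w' y' : ℝ, a < w' ∧ w' < y' ∧ (y' : EReal) < b ∧
      ∀ w y : ℝ, a < w → w < y → (y : EReal) < b →
        FF μ σ c x₀ a p K γ w y ≤ FF μ σ c x₀ a p K γ w' y') ∧
    (∀ w' y' : ℝ, a < w' → w' < y' → (y' : EReal) < b →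
      (∀ w y : ℝ, a < w → w < y → (y : EReal) < b →
        FF μ σ c x₀ a p K γ w y ≤ FF μ σ c x₀ a p K γ w' y') →
      FF μ σ c x₀ a p K γ w' y' = hF μ σ c x₀ a p γ w' ∧
      FF μ σ c x₀ a p K γ w' y' = hF μ σ c x₀ a p γ y') :=
  statement11_general a b μ σ x₀ hx₀ hμcont hσcont hσpos hMfin hsa hsMb hbnat hanat μa hμa c hccont
    hcmono ca cb hca hcb p K γ hK hγ hint
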